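/- Let n ≥ 1 and let [k_n, k_{n−1}, …, k_1] be an admissible sequence of nonnegative integers. Then the permutation w = c_{k_n,n} c_{k_{n−1},n−1} ⋯ c_{k_1,1} ∈ S_{2n} is the unique element of minimal length in its double coset O_w, and ℓ(w) = k_n + k_{n−1} + ⋯ + k_1. -/

import Mathlib

/-- The subgroup `S ⊆ S_{2n}` of permutations fixing each of the last `n` points
(`n+1, …, 2n` in one-based terms, i.e. the indices `i` with `n ≤ i` in zero-based terms). -/
def Sfix (n : ℕ) : Set (Equiv.Perm (Fin (2 * n))) :=
  {g | ∀ i : Fin (2 * n), n ≤ (i : ℕ) → g i = i}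

/-- The double coset `O_σ = {g σ h : g, h ∈ S}`. -/
def dcoset (n : ℕ) (σ : Equiv.Perm (Fin (2 * n))) : Set (Equiv.Perm (Fin (2 * n))) :=
  {t | ∃ g ∈ Sfix n, ∃ h ∈ Sfix n, t = g * σ * h}

/-- The length of a permutation: its number of inversions. -/
noncomputable def len (n : ℕ) (σ : Equiv.Perm (Fin (2 * n))) : ℕ :=
  {p : Fin (2 * n) × Fin (2 * n) | p.1 < p.2 ∧ σ p.2 < σ p.1}.ncard

/-- The adjacent transposition `s_i = (i, i+1)` of `{1, …, m}` (one-based), i.e. the swap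
of the zero-based positions `i-1` and `i`; it is the identity for out-of-range `i`. -/
def sTrans (m i : ℕ) : Equiv.Perm (Fin m) :=
  if h : 1 ≤ i ∧ i < m then
    Equiv.swap ⟨i - 1, by omega⟩ ⟨i, h.2⟩
  else 1

/-- The cycle `c_{k,j} = s_{j+n-k} s_{j+n-k+1} ⋯ s_{j+n-1} ∈ S_{2n}` (with `c_{0,j} = e`). -/
def cyc (n k j : ℕ) : Equiv.Perm (Fin (2 * n)) :=
  ((List.range k).map fun t => sTrans (2 * n) (j + n - k + t)).prod

/-- The product `c_{k_n,n} c_{k_{n-1},n-1} ⋯ c_{k_1,1} ∈ S_{2n}` associated to a sequence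
`[k_n, …, k_1]` (encoded as a function `k : ℕ → ℕ` on the indices `1, …, n`). -/
def cycProd (n : ℕ) (k : ℕ → ℕ) : Equiv.Perm (Fin (2 * n)) :=
  ((List.range n).map fun t => cyc n (k (n - t)) (n - t)).prod

/-- The bound `max (max_{j < i ≤ n} (k_i + j + 1 - i)) j` appearing in admissibility. -/
def admBound (n : ℕ) (k : ℕ → ℕ) (j : ℕ) : ℕ :=
  max ((Finset.Ioc j n).sup fun i => k i + j + 1 - i) j

/-- A sequence `[k_n, …, k_1]` of nonnegative integers is admissible if
`k_j ≤ max (max_{j < i ≤ n} (k_i + j + 1 - i)) j` for every `1 ≤ j ≤ n`. -/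
def Admissible (n : ℕ) (k : ℕ → ℕ) : Prop :=
  ∀ j, 1 ≤ j → j ≤ n → k j ≤ admBound n k j

/-!
For `g, h ∈ S`, the map `(p, q) ↦ (h⁻¹ p, h⁻¹ q)` injects the inversions of `w` into those of
`g w h` as soon as every inversion `(p, q)` of `w` has `q ≥ n` and `w p ≥ n` (zero-based). Such a
`w` is therefore of minimal length in its double coset, and any `g w h` of the same length has
the same property, the injection being onto. Two such elements `w` and `g w h` agree: each of
their values `< n` is determined by the number of values `< n` to its right, so they agree on
positions `≥ n`, where `h` acts trivially and `g` preserves the values `< n`; applied to the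
inverses, this shows that they send the same positions to values `< n`, hence agree everywhere.

Right multiplication by `c_{k,j}` moves the entry at position `n + j - 1 - k` past the `k` entries
after it. Building `c_{k_n,n} ⋯ c_{k_1,1}` from the left, the first `n + j` entries before the
factor `c_{k_j,j}` are increasing, so each factor adds exactly `k_j` inversions; admissibility says
that a value `< n` is only moved when it is the largest such value in that prefix, which keeps the
values `< n` in increasing order.
-/

open Finset Equiv

section Inversions

variable {N : ℕ}

def inversions (σ : Perm (Fin N)) : Finset (Fin N × Fin N) :=
  {p | p.1 < p.2 ∧ σ p.2 < σ p.1}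

lemma mem_inversions {σ : Perm (Fin N)} {p : Fin N × Fin N} :
    p ∈ inversions σ ↔ p.1 < p.2 ∧ σ p.2 < σ p.1 := by
  simp [inversions]

lemma len_eq_card_inversions (n : ℕ) (σ : Perm (Fin (2 * n))) :
    len n σ = #(inversions σ) := by
  rw [len, ← Set.ncard_coe_finset]
  congr
  ext
  simp [inversions]

lemma inversions_one : inversions (1 : Perm (Fin N)) = ∅ := by
  ext p
  simpa [mem_inversions] using le_of_lt

lemma card_inversions_mul_swap (u : Perm (Fin N)) {a b : Fin N} (hab : (b : ℕ) = a + 1)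
    (hu : u a < u b) : #(inversions (u * swap a b)) = #(inversions u) + 1 := by
  have hmap : (inversions (u * swap a b)).map (prodCongr (swap a b) (swap a b)).toEmbedding =
      insert (b, a) (inversions u) := by
    ext ⟨p, q⟩
    simp only [mem_map_equiv, prodCongr_symm, symm_swap, prodCongr_apply, Prod.map,
      mem_inversions, Perm.mul_apply, swap_apply_self, mem_insert, Prod.mk.injEq]
    simp only [swap_apply_def]
    rw [Fin.lt_def] at hu
    split_ifs <;> subst_vars <;>
      simp only [Fin.lt_def, Fin.ext_iff, true_and, true_or, iff_true] at * <;> omega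
  have hba : (b, a) ∉ inversions u := fun h => by
    have hlt : b < a := (mem_inversions.1 h).1
    rw [Fin.lt_def] at hlt
    omega
  rw [← card_map, hmap, card_insert_of_notMem hba]

end Inversions

section DoubleCoset

variable {n : ℕ} {σ w t g h : Perm (Fin (2 * n))}

lemma Sfix.one_mem : (1 : Perm (Fin (2 * n))) ∈ Sfix n := fun _ _ => rfl

lemma Sfix.inv_mem (hg : g ∈ Sfix n) : g⁻¹ ∈ Sfix n := fun i hi => by
  rw [Perm.inv_eq_iff_eq, hg i hi]

lemma Sfix.apply_lt_iff (hg : g ∈ Sfix n) {x : Fin (2 * n)} : (g x : ℕ) < n ↔ (x : ℕ) < n := by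
  constructor
  · intro hgx
    by_contra! hx
    rw [hg x hx] at hgx
    omega
  · intro hx
    by_contra! hgx
    have := g.injective (hg (g x) hgx)
    omega

lemma Sfix.apply_lt (hg : g ∈ Sfix n) {x y : Fin (2 * n)} (hy : n ≤ (y : ℕ)) (hxy : x < y) :
    g x < y := by
  by_cases hx : (x : ℕ) < n
  · exact Fin.lt_def.2 (by have := (Sfix.apply_lt_iff hg).2 hx; omega)
  · rwa [hg x (by omega)]

lemma self_mem_dcoset : σ ∈ dcoset n σ := ⟨1, Sfix.one_mem, 1, Sfix.one_mem, by simp⟩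

def IsMinRep (n : ℕ) (σ : Perm (Fin (2 * n))) : Prop :=
  ∀ p q : Fin (2 * n), p < q → σ q < σ p → n ≤ (q : ℕ) ∧ n ≤ (σ p : ℕ)

namespace IsMinRep

lemma inv (hσ : IsMinRep n σ) : IsMinRep n σ⁻¹ := by
  intro p q hpq hqp
  have := hσ (σ⁻¹ q) (σ⁻¹ p) hqp (by simpa using hpq)
  simp only [Perm.coe_inv, apply_symm_apply] at this
  exact ⟨this.2, this.1⟩

lemma strictMonoOn (hσ : IsMinRep n σ) : StrictMonoOn σ {x | (σ x : ℕ) < n} := by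
  intro p hp q hq hpq
  by_contra! hqp
  have := (hσ p q hpq (lt_of_le_of_ne hqp (σ.injective.ne hpq.ne'))).2
  simp only [Set.mem_ofPred_eq] at hp
  omega

lemma card_filter (hσ : IsMinRep n σ) {p : Fin (2 * n)} (hp : (σ p : ℕ) < n) :
    #{q | p < q ∧ (σ q : ℕ) < n} = n - 1 - σ p := by
  have hmap : ({q | p < q ∧ (σ q : ℕ) < n} : Finset _).map σ.toEmbedding =
      Ioo (σ p) ⟨n, by omega⟩ := by
    ext v
    have hv := hσ.strictMonoOn.lt_iff_lt (a := p) (b := σ⁻¹ v) hp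
    simp only [mem_map_equiv, mem_filter, mem_univ, true_and, mem_Ioo, Fin.lt_def,
      Set.mem_ofPred_eq, Perm.coe_inv, apply_symm_apply] at hv ⊢
    exact ⟨fun ⟨h1, h2⟩ => ⟨(hv h2).2 h1, h2⟩, fun ⟨h1, h2⟩ => ⟨(hv h2).1 h1, h2⟩⟩
  rw [← card_map, hmap, Fin.card_Ioo]
  exact Nat.sub_right_comm _ _ _

lemma apply_eq_of_lt_iff (hw : IsMinRep n w) (ht : IsMinRep n t) {p : Fin (2 * n)}
    (hwp : (w p : ℕ) < n) (htp : (t p : ℕ) < n)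
    (hwt : ∀ q, p < q → ((w q : ℕ) < n ↔ (t q : ℕ) < n)) : w p = t p := by
  have hw' := hw.card_filter hwp
  rw [filter_congr fun q _ => and_congr_right (hwt q), ht.card_filter htp] at hw'
  exact Fin.ext (by omega)

lemma apply_eq_of_le (hw : IsMinRep n w) (ht : IsMinRep n t) (hg : g ∈ Sfix n)
    (hh : h ∈ Sfix n) (htw : t = g * w * h) {p : Fin (2 * n)} (hp : n ≤ (p : ℕ)) :
    t p = w p := by
  have htq : ∀ q : Fin (2 * n), n ≤ (q : ℕ) → t q = g (w q) := fun q hq => by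
    rw [htw, Perm.mul_apply, Perm.mul_apply, hh q hq]
  by_cases hwp : (w p : ℕ) < n
  · refine (hw.apply_eq_of_lt_iff ht hwp ?_ fun q hpq => ?_).symm
    · rwa [htq p hp, Sfix.apply_lt_iff hg]
    · rw [htq q (hp.trans hpq.le), Sfix.apply_lt_iff hg]
  · rw [htq p hp, hg _ (by omega)]

lemma eq_of_mem_dcoset (ht : IsMinRep n t) (hw : IsMinRep n w) (htw : t ∈ dcoset n w) :
    t = w := by
  obtain ⟨g, hg, h, hh, rfl⟩ := htw
  have hinv : ∀ v : Fin (2 * n), n ≤ (v : ℕ) → (g * w * h)⁻¹ v = w⁻¹ v :=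
    fun v => hw.inv.apply_eq_of_le ht.inv (Sfix.inv_mem hh) (Sfix.inv_mem hg) (by group)
  have hw_high : ∀ q, n ≤ (w q : ℕ) → (g * w * h) q = w q := fun q hq => by
    have := hinv (w q) hq
    rw [Perm.inv_eq_iff_eq] at this
    simpa using this.symm
  have ht_high : ∀ q, n ≤ ((g * w * h) q : ℕ) → w q = (g * w * h) q := fun q hq => by
    have := hinv _ hq
    rw [eq_comm, Perm.inv_eq_iff_eq] at this
    simpa using this.symm
  have hlow : ∀ q, (w q : ℕ) < n ↔ ((g * w * h) q : ℕ) < n := fun q => by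
    constructor
    · intro hwq
      by_contra! htq
      rw [ht_high q htq] at hwq
      omega
    · intro htq
      by_contra! hwq
      rw [hw_high q hwq] at htq
      omega
  ext p
  by_cases hwp : (w p : ℕ) < n
  · rw [hw.apply_eq_of_lt_iff ht hwp ((hlow p).1 hwp) fun q _ => hlow q]
  · rw [hw_high p (by omega)]

lemma map_inversions_subset (hw : IsMinRep n w) (hg : g ∈ Sfix n) (hh : h ∈ Sfix n) :
    (inversions w).map (prodCongr h⁻¹ h⁻¹).toEmbedding ⊆ inversions (g * w * h) := by
  intro x hx
  obtain ⟨⟨p, q⟩, hpq, rfl⟩ := mem_map.1 hx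
  obtain ⟨hlt, hinv⟩ := mem_inversions.1 hpq
  obtain ⟨hq, hwp⟩ := hw p q hlt hinv
  refine mem_inversions.2 ⟨?_, ?_⟩
  · show h⁻¹ p < h⁻¹ q
    rw [Sfix.inv_mem hh q hq]
    exact Sfix.apply_lt (Sfix.inv_mem hh) hq hlt
  · show g (w (h (h⁻¹ q))) < g (w (h (h⁻¹ p)))
    simp only [Perm.coe_inv, apply_symm_apply]
    rw [hg (w p) hwp]
    exact Sfix.apply_lt hg hwp hinv

lemma card_inversions_le (hw : IsMinRep n w) (hg : g ∈ Sfix n) (hh : h ∈ Sfix n) :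
    #(inversions w) ≤ #(inversions (g * w * h)) :=
  (card_map _).symm.le.trans (card_le_card (hw.map_inversions_subset hg hh))

lemma of_card_inversions_le (hw : IsMinRep n w) (hg : g ∈ Sfix n) (hh : h ∈ Sfix n)
    (hle : #(inversions (g * w * h)) ≤ #(inversions w)) : IsMinRep n (g * w * h) := by
  have heq := eq_of_subset_of_card_le (hw.map_inversions_subset hg hh) (by rwa [card_map])
  intro p q hpq hqp
  have hmem : (p, q) ∈ inversions (g * w * h) := mem_inversions.2 ⟨hpq, hqp⟩
  rw [← heq, mem_map_equiv] at hmem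
  obtain ⟨hq, hwp⟩ : n ≤ (h q : ℕ) ∧ n ≤ (w (h p) : ℕ) :=
    hw _ _ (mem_inversions.1 hmem).1 (mem_inversions.1 hmem).2
  constructor
  · by_contra! hq'
    exact absurd ((Sfix.apply_lt_iff hh).2 hq') (not_lt.2 hq)
  · show n ≤ (g (w (h p)) : ℕ)
    rwa [hg _ hwp]

end IsMinRep

end DoubleCoset

section Cycle

variable {n k j : ℕ}

lemma sTrans_apply_val {m i : ℕ} (h1 : 1 ≤ i) (h2 : i < m) (x : Fin m) :
    (sTrans m i x : ℕ) = if (x : ℕ) = i - 1 then i else if (x : ℕ) = i then i - 1 else x := by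
  rw [sTrans, dif_pos ⟨h1, h2⟩, swap_apply_def]
  split_ifs <;> simp only [Fin.ext_iff] at * <;> omega

lemma cyc_succ (hk : k < n + j) :
    cyc n (k + 1) j = sTrans (2 * n) (n + j - 1 - k) * cyc n k j := by
  simp only [cyc, List.range_succ_eq_map, List.map_cons, List.prod_cons, List.map_map]
  congr 2
  · omega
  · congr 1
    funext t
    simp only [Function.comp_apply]
    congr 1
    omega

lemma cyc_apply_val (hk : k < n + j) (hj : j ≤ n) (x : Fin (2 * n)) :
    (cyc n k j x : ℕ) =
      if (x : ℕ) < n + j - 1 - k ∨ n + j - 1 < (x : ℕ) then (x : ℕ)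
      else if (x : ℕ) < n + j - 1 then (x : ℕ) + 1 else n + j - 1 - k := by
  induction k with
  | zero =>
    simp only [cyc, List.range_zero, List.map_nil, List.prod_nil, Perm.one_apply]
    split_ifs <;> omega
  | succ k ih =>
    rw [cyc_succ (by omega), Perm.mul_apply, sTrans_apply_val (by omega) (by omega),
      ih (by omega)]
    split_ifs <;> omega

lemma card_inversions_mul_cyc (hk : k < n + j) (hj : j ≤ n) (u : Perm (Fin (2 * n)))
    (hu : StrictMonoOn u {x | n + j - 1 - k ≤ (x : ℕ) ∧ (x : ℕ) ≤ n + j - 1}) :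
    #(inversions (u * cyc n k j)) = #(inversions u) + k := by
  induction k generalizing u with
  | zero => simp [cyc]
  | succ k ih =>
    have hs : u * sTrans (2 * n) (n + j - 1 - k) =
        u * swap ⟨n + j - 1 - k - 1, by omega⟩ ⟨n + j - 1 - k, by omega⟩ := by
      rw [sTrans, dif_pos (by omega)]
    have hmono : StrictMonoOn (u * sTrans (2 * n) (n + j - 1 - k))
        {x | n + j - 1 - k ≤ (x : ℕ) ∧ (x : ℕ) ≤ n + j - 1} := by
      intro x hx y hy hxy
      simp only [Set.mem_ofPred_eq, Fin.lt_def] at hx hy hxy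
      simp only [Perm.mul_apply]
      apply hu <;>
        simp only [Set.mem_ofPred_eq, Fin.lt_def, sTrans_apply_val (by omega : 1 ≤ n + j - 1 - k)
          (by omega : n + j - 1 - k < 2 * n)] <;>
        split_ifs <;> omega
    rw [cyc_succ (by omega), ← mul_assoc, ih (by omega) _ hmono, hs,
      card_inversions_mul_swap _ (Nat.sub_add_cancel (show 1 ≤ n + j - 1 - k by omega)).symm
        (hu (by simp only [Set.mem_ofPred_eq]; omega) (by simp only [Set.mem_ofPred_eq]; omega)
          (Fin.mk_lt_mk.2 (by omega)))]
    ring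

end Cycle

/-- The number of values `< n` that the first `m` factors `c_{k_n,n}, …, c_{k_{n-m+1},n-m+1}`
of `cycProd n k` carry into the last `n` positions. -/
def lowCount (n : ℕ) (k : ℕ → ℕ) : ℕ → ℕ
  | 0 => 0
  | m + 1 => lowCount n k m + if n - m + lowCount n k m ≤ k (n - m) then 1 else 0

section Admissible

variable {n : ℕ} {k : ℕ → ℕ}

lemma lowCount_le (m : ℕ) : lowCount n k m ≤ m := by
  induction m with
  | zero => rfl
  | succ m ih => simp only [lowCount]; split_ifs <;> omega

lemma lowCount_mono : Monotone (lowCount n k) :=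
  monotone_nat_of_le_succ fun m => by simp only [lowCount]; split_ifs <;> omega

lemma Admissible.le_add_lowCount (hk : Admissible n k) {m : ℕ} (hm : m < n) :
    k (n - m) ≤ n - m + lowCount n k m := by
  induction m using Nat.strong_induction_on with
  | _ m ih =>
  refine (hk (n - m) (by omega) (by omega)).trans
    (max_le (Finset.sup_le fun i hi => ?_) (Nat.le_add_right _ _))
  rw [mem_Ioc] at hi
  have hki := ih (n - i) (by omega) (by omega)
  rw [Nat.sub_sub_self hi.2] at hki
  have hmono := lowCount_mono (n := n) (k := k) (show n - i + 1 ≤ m by omega)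
  have hsucc : lowCount n k (n - i + 1) =
      lowCount n k (n - i) + if i + lowCount n k (n - i) ≤ k i then 1 else 0 := by
    rw [lowCount, Nat.sub_sub_self hi.2]
  split_ifs at hsucc <;> omega

end Admissible

/-- The shape of `cycPrefix n k m`, with `L = 2 * n - m` and `D = lowCount n k m`. -/
structure SortedPrefix (n L D : ℕ) (P : Perm (Fin (2 * n))) : Prop where
  strictMonoOn_lt : StrictMonoOn P {x | (x : ℕ) < L}
  lt_iff : ∀ x : Fin (2 * n), (x : ℕ) < L → ((P x : ℕ) < n ↔ (x : ℕ) < n - D)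
  strictMonoOn_low : StrictMonoOn P {x | (P x : ℕ) < n}

namespace SortedPrefix

variable {n L D : ℕ} {P : Perm (Fin (2 * n))}

lemma one (n : ℕ) : SortedPrefix n (2 * n) 0 1 where
  strictMonoOn_lt _ _ _ _ h := h
  lt_iff _ _ := Iff.rfl
  strictMonoOn_low _ _ _ _ h := h

lemma isMinRep (hP : SortedPrefix n L D P) (hL : n ≤ L) : IsMinRep n P := by
  intro p q hpq hqp
  constructor
  · by_contra! hq
    exact lt_asymm (hP.strictMonoOn_lt (show (p : ℕ) < L by omega) (show (q : ℕ) < L by omega)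
      hpq) hqp
  · by_contra! hp
    have hq : (P q : ℕ) < n := lt_trans (Fin.lt_def.1 hqp) hp
    exact lt_asymm (hP.strictMonoOn_low hp hq hpq) hqp

/-- The entry moved by `c_{K,j}`, from position `n + j - 1 - K`, is a value `< n` exactly when
`j + D ≤ K`; then `K ≤ j + D` makes it the largest such value in the prefix. -/
lemma mul_cyc {j K : ℕ} (hP : SortedPrefix n (n + j) D P) (hj1 : 1 ≤ j) (hj : j ≤ n)
    (hD : D < n) (hK : K ≤ j + D) :
    SortedPrefix n (n + j - 1) (D + if j + D ≤ K then 1 else 0) (P * cyc n K j) := by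
  have hc := cyc_apply_val (k := K) (by omega) hj
  refine ⟨fun x hx y hy hxy => ?_, fun x hx => ?_, fun x hx y hy hxy => ?_⟩
  · simp only [Set.mem_ofPred_eq] at hx hy
    rw [Fin.lt_def] at hxy
    have hcx := hc x
    have hcy := hc y
    exact hP.strictMonoOn_lt (show (cyc n K j x : ℕ) < n + j by split_ifs at hcx <;> omega)
      (show (cyc n K j y : ℕ) < n + j by split_ifs at hcy <;> omega)
      (Fin.lt_def.2 (by split_ifs at hcx hcy <;> omega))
  · have hcx := hc x
    rw [Perm.mul_apply, hP.lt_iff _ (by split_ifs at hcx <;> omega)]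
    split_ifs at hcx ⊢ <;> omega
  · simp only [Set.mem_ofPred_eq, Perm.mul_apply] at hx hy ⊢
    rcases lt_or_gt_of_ne ((cyc n K j).injective.ne hxy.ne) with h | h
    · exact hP.strictMonoOn_low hx hy h
    · exfalso
      rw [Fin.lt_def] at hxy h
      have hcx := hc x
      have hcy := hc y
      have hx' := (hP.lt_iff _ (by split_ifs at hcx hcy <;> omega)).1 hx
      have hy' := (hP.lt_iff _ (by split_ifs at hcx hcy <;> omega)).1 hy
      split_ifs at hcx hcy <;> omega

end SortedPrefix

section CycPrefix

variable {n : ℕ} {k : ℕ → ℕ}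

def cycPrefix (n : ℕ) (k : ℕ → ℕ) (m : ℕ) : Perm (Fin (2 * n)) :=
  ((List.range m).map fun t => cyc n (k (n - t)) (n - t)).prod

lemma cycPrefix_succ (m : ℕ) :
    cycPrefix n k (m + 1) = cycPrefix n k m * cyc n (k (n - m)) (n - m) := by
  simp [cycPrefix, List.range_succ]

lemma sortedPrefix_cycPrefix (hk : Admissible n k) {m : ℕ} (hm : m ≤ n) :
    SortedPrefix n (2 * n - m) (lowCount n k m) (cycPrefix n k m) := by
  induction m with
  | zero => simpa [cycPrefix, lowCount] using SortedPrefix.one n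
  | succ m ih =>
    have hP := ih (by omega)
    rw [show 2 * n - m = n + (n - m) by omega] at hP
    rw [cycPrefix_succ, show 2 * n - (m + 1) = n + (n - m) - 1 by omega]
    exact hP.mul_cyc (by omega) (by omega) ((lowCount_le m).trans_lt (by omega))
      (hk.le_add_lowCount (by omega))

lemma card_inversions_cycPrefix (hk : Admissible n k) {m : ℕ} (hm : m ≤ n) :
    #(inversions (cycPrefix n k m)) = ∑ t ∈ range m, k (n - t) := by
  induction m with
  | zero => simp [cycPrefix, inversions_one]
  | succ m ih =>
    have hK := hk.le_add_lowCount (m := m) (by omega)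
    have hm' := lowCount_le (n := n) (k := k) m
    have hP := sortedPrefix_cycPrefix hk (m := m) (by omega)
    rw [cycPrefix_succ, card_inversions_mul_cyc (by omega) (by omega), ih (by omega),
      sum_range_succ]
    exact hP.strictMonoOn_lt.mono fun x hx => by
      simp only [Set.mem_ofPred_eq] at hx ⊢
      omega

end CycPrefix

lemma sum_range_sub_eq_sum_Icc {M : Type*} [AddCommMonoid M] (f : ℕ → M) (n : ℕ) :
    ∑ t ∈ range n, f (n - t) = ∑ j ∈ Icc 1 n, f j := by
  rw [← Nat.Ico_zero_eq_range, sum_Ico_reflect _ _ (Nat.le_succ n), Nat.add_sub_cancel_left,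
    Nat.sub_zero, Ico_add_one_right_eq_Icc]

theorem cycProd_unique_minimal_general (n : ℕ) (k : ℕ → ℕ) (hk : Admissible n k) :
    (∀ t ∈ dcoset n (cycProd n k), len n (cycProd n k) ≤ len n t) ∧
    (∀ w ∈ dcoset n (cycProd n k),
      (∀ t ∈ dcoset n (cycProd n k), len n w ≤ len n t) → w = cycProd n k) ∧
    len n (cycProd n k) = ∑ j ∈ Finset.Icc 1 n, k j := by
  have hw : IsMinRep n (cycProd n k) := (sortedPrefix_cycPrefix hk le_rfl).isMinRep (by omega)
  refine ⟨?_, ?_, ?_⟩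
  · rintro _ ⟨g, hg, h, hh, rfl⟩
    rw [len_eq_card_inversions, len_eq_card_inversions]
    exact hw.card_inversions_le hg hh
  · rintro _ ⟨g, hg, h, hh, rfl⟩ hmin
    have hle := hmin _ self_mem_dcoset
    rw [len_eq_card_inversions, len_eq_card_inversions] at hle
    exact (hw.of_card_inversions_le hg hh hle).eq_of_mem_dcoset hw ⟨g, hg, h, hh, rfl⟩
  · rw [len_eq_card_inversions, ← sum_range_sub_eq_sum_Icc]
    exact card_inversions_cycPrefix hk le_rfl

/-- For every admissible sequence `[k_n, …, k_1]`, the permutation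
`w = c_{k_n,n} ⋯ c_{k_1,1}` is the unique element of minimal length in its double coset
`O_w`, and `ℓ(w) = k_n + ⋯ + k_1`. -/
theorem cycProd_unique_minimal (n : ℕ) (hn : 1 ≤ n) (k : ℕ → ℕ) (hk : Admissible n k) :
    (∀ t ∈ dcoset n (cycProd n k), len n (cycProd n k) ≤ len n t) ∧
    (∀ w ∈ dcoset n (cycProd n k),
      (∀ t ∈ dcoset n (cycProd n k), len n w ≤ len n t) → w = cycProd n k) ∧
    len n (cycProd n k) = ∑ j ∈ Finset.Icc 1 n, k j :=
  cycProd_unique_minimal_general n k hk
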